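/- arXiv:2506.00323 — 3 statements merged into one kernel-verified Lean document; each statement's English description precedes it below -/
import Mathlib

section
/- The polynomial xy + g(z^2,t), where g(z^2,t) ∈ C[z,t] is a polynomial in z^2 and t whose weighted order with respect to wt(z,t) = (1,2) is 6 and which contains the monomial t^3 with nonzero coefficient, has irreducible weighted-degree-6 part x·y + g_{wt=6}(z^2,t) when x,y are given weights 5 and 1 respectively; i.e., the polynomial x y + g_{wt=6}(z^2,t) is irreducible in C[x,y,z,t]. -/
/-!
As a polynomial in `x` over `ℂ[y, z, t]`, `x y + g` is linear: `y · x + g` with `g` free of `x`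
and `y`, and `g ≠ 0` because it contains `t³`. The prime `y` does not divide `g`, so this
degree-one polynomial is primitive, hence irreducible.
-/

open MvPolynomial

namespace MvPolynomial

variable {R : Type*}

theorem not_X_dvd_of_forall_mem_support [CommSemiring R] {σ : Type*} {i : σ}
    {p : MvPolynomial σ R} (hp : p ≠ 0) (h : ∀ d ∈ p.support, d i = 0) : ¬ X i ∣ p := by
  classical
  rintro ⟨q, rfl⟩
  obtain ⟨d, hd⟩ := support_nonempty.mpr hp
  have hid : i ∉ d.support := Finsupp.notMem_support_iff.mpr (h d hd)
  exact mem_support_iff.mp hd (by rw [coeff_X_mul', if_neg hid])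

theorem finSuccEquiv_eq_C_of_forall_mem_support [CommSemiring R] {n : ℕ}
    {f : MvPolynomial (Fin (n + 1)) R} (h : ∀ d ∈ f.support, d 0 = 0) :
    finSuccEquiv R n f = Polynomial.C ((finSuccEquiv R n f).coeff 0) := by
  refine Polynomial.eq_C_of_natDegree_eq_zero ?_
  rw [natDegree_finSuccEquiv, degreeOf_eq_sup]
  exact (Finset.sup_eq_bot_iff _ _).mpr h

theorem irreducible_X_zero_mul_X_succ_add [CommRing R] [IsDomain R] {n : ℕ} (j : Fin n)
    {g : MvPolynomial (Fin (n + 1)) R} (hg : g ≠ 0)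
    (hsupp : ∀ d ∈ g.support, d 0 = 0 ∧ d j.succ = 0) :
    Irreducible (X 0 * X j.succ + g) := by
  set e := finSuccEquiv R n
  set g₀ := (e g).coeff 0
  have he : e g = Polynomial.C g₀ :=
    finSuccEquiv_eq_C_of_forall_mem_support fun d hd => (hsupp d hd).1
  have hg₀ : g₀ ≠ 0 := fun h => hg (e.injective (by rw [he, h, map_zero, map_zero]))
  have hg₀supp : ∀ m ∈ g₀.support, m j = 0 := by
    intro m hm
    rw [mem_support_iff, finSuccEquiv_coeff_coeff] at hm
    simpa using (hsupp _ (mem_support_iff.mpr hm)).2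
  have himage :
      e (X 0 * X j.succ + g) = Polynomial.C (X j) * Polynomial.X + Polynomial.C g₀ := by
    rw [map_add, map_mul, he, finSuccEquiv_X_zero, finSuccEquiv_X_succ, mul_comm]
  rw [← MulEquiv.irreducible_iff e, himage]
  exact Polynomial.irreducible_C_mul_X_add_C (X_ne_zero j)
    (X_prime.irreducible.isRelPrime_iff_not_dvd.mpr
      (not_X_dvd_of_forall_mem_support hg₀ hg₀supp))

end MvPolynomial

theorem irreducible_xy_add_gwt6_general
    (g : MvPolynomial (Fin 4) ℂ)
    (hvars : ∀ d ∈ g.support, d 0 = 0 ∧ d 1 = 0 ∧ Even (d 2))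
    (ht3 : coeff (Finsupp.single 3 3) g ≠ 0) :
    Irreducible (X 0 * X 1 + g : MvPolynomial (Fin 4) ℂ) := by
  have hg : g ≠ 0 := by
    rintro rfl
    exact ht3 (coeff_zero _)
  exact irreducible_X_zero_mul_X_succ_add (0 : Fin 3) hg
    fun d hd => ⟨(hvars d hd).1, (hvars d hd).2.1⟩

/-- if `g` is a polynomial in `z², t` (variables `z = X 2`, `t = X 3`),
quasi-homogeneous of weighted degree exactly `6` with respect to `wt(z,t) = (1,2)`
(so `g` is the weighted-degree-6 part `g_{wt=6}` of a polynomial of weighted order 6),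
and the monomial `t³` appears in `g` with nonzero coefficient, then
`x·y + g` is irreducible in `ℂ[x,y,z,t]`. -/
theorem irreducible_xy_add_gwt6
    (g : MvPolynomial (Fin 4) ℂ)
    (hvars : ∀ d ∈ g.support, d 0 = 0 ∧ d 1 = 0 ∧ Even (d 2))
    (hdeg : ∀ d ∈ g.support, d 2 + 2 * d 3 = 6)
    (ht3 : coeff (Finsupp.single 3 3) g ≠ 0) :
    Irreducible (X 0 * X 1 + g : MvPolynomial (Fin 4) ℂ) :=
  irreducible_xy_add_gwt6_general g hvars ht3
end

section
/- Let X be the hypersurface in P(1,1,1,2,3) with coordinates (u,y,z,t,v) of weights (1,1,1,2,3), defined by a quasi-homogeneous polynomial of degree 7 of the form F = v^2 u + h(u,y,z,t,v) where h ∈ (u,y,t)^2 (the square of the ideal generated by u,y,t). Then along the curve C = (u = y = t = 0) ⊂ P(1,1,1,2,3), the point p_z = (0:0:1:0:0) is the unique point of C ∩ X at which X fails to be quasismooth. -/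
open MvPolynomial

/-!
On the curve `C = (u = y = t = 0)` every element of `I = (u, y, t)` vanishes, hence so do `h` and,
by the Leibniz rule, all first partial derivatives of `h ∈ I²`. So `F = v²u + h` vanishes on `C`,
and there its gradient is that of `v²u`, namely `(v², 0, 0, 0, 2uv) = (v², 0, 0, 0, 0)`, which
is zero exactly where `v = 0`.
-/

theorem Derivation.map_mem_of_mem_sq {R A : Type*} [CommSemiring R] [CommRing A] [Algebra R A]
    (D : Derivation R A A) {I : Ideal A} {a : A} (ha : a ∈ I ^ 2) : D a ∈ I := by
  rw [sq] at ha
  refine Submodule.mul_induction_on ha (fun b hb c hc => ?_) (fun b c hb hc => ?_)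
  · rw [Derivation.leibniz, smul_eq_mul, smul_eq_mul]
    exact I.add_mem (I.mul_mem_right _ hb) (I.mul_mem_right _ hc)
  · rw [map_add]
    exact I.add_mem hb hc

theorem MvPolynomial.eval_eq_zero_of_mem_span_X {σ R : Type*} [CommSemiring R] {s : Set σ}
    {q : σ → R} (hq : ∀ i ∈ s, q i = 0) {p : MvPolynomial σ R}
    (hp : p ∈ Ideal.span (X '' s)) : eval q p = 0 := by
  suffices Ideal.span (X '' s) ≤ RingHom.ker (eval q) from this hp
  rw [Ideal.span_le]
  rintro _ ⟨i, hi, rfl⟩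
  simp [hq i hi]

theorem pz_unique_non_quasismooth_point_on_curve_general
    (F h : MvPolynomial (Fin 5) ℂ)
    (hF : F = X 4 ^ 2 * X 0 + h)
    (hh : h ∈ (Ideal.span ({X 0, X 1, X 3} : Set (MvPolynomial (Fin 5) ℂ))) ^ 2) :
    ∀ q : Fin 5 → ℂ, q ≠ 0 → q 0 = 0 → q 1 = 0 → q 3 = 0 →
      eval q F = 0 ∧
      ((∀ i : Fin 5, eval q (pderiv i F) = 0) ↔ q 4 = 0) := by
  intro q _ h0 h1 h3
  have hI : Ideal.span ({X 0, X 1, X 3} : Set (MvPolynomial (Fin 5) ℂ)) =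
      Ideal.span (X '' {0, 1, 3}) := by
    simp only [Set.image_insert_eq, Set.image_singleton]
  have hvanish : ∀ p ∈ Ideal.span ({X 0, X 1, X 3} : Set (MvPolynomial (Fin 5) ℂ)),
      eval q p = 0 := by
    rw [hI]
    refine fun p => eval_eq_zero_of_mem_span_X ?_
    rintro i (rfl | rfl | rfl) <;> assumption
  have hpderiv (i : Fin 5) : eval q (pderiv i h) = 0 :=
    hvanish _ ((pderiv i).map_mem_of_mem_sq hh)
  refine ⟨?_, ⟨fun hall => ?_, fun h4 i => ?_⟩⟩
  · simp [hF, hvanish h (Ideal.pow_le_self two_ne_zero hh), h0]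
  · simpa [hF, hpderiv, pderiv_mul, pderiv_X, h0] using hall 0
  · simp [hF, hpderiv, h0, h4]

/-- let `X = (F = 0) ⊂ ℙ(1,1,1,2,3)` with coordinates
`u,y,z,t,v = X 0, X 1, X 2, X 3, X 4` of weights `1,1,1,2,3`, where `F` is
quasi-homogeneous of degree `7` of the form `F = v²u + h` with
`h ∈ (u,y,t)²`.  Then the curve `C = (u = y = t = 0)` is contained in `X`,
and along `C` the point `p_z = (0:0:1:0:0)` (i.e. the points of the punctured
cone over `C` with `v = 0`) is the unique point at which `X` fails to be
quasismooth: all partial derivatives of `F` vanish at a point of the punctured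
cone over `C` if and only if the `v`-coordinate vanishes there. -/
theorem pz_unique_non_quasismooth_point_on_curve
    (F h : MvPolynomial (Fin 5) ℂ)
    (hdeg : ∀ d ∈ F.support, d 0 + d 1 + d 2 + 2 * d 3 + 3 * d 4 = 7)
    (hF : F = X 4 ^ 2 * X 0 + h)
    (hh : h ∈ (Ideal.span ({X 0, X 1, X 3} : Set (MvPolynomial (Fin 5) ℂ))) ^ 2) :
    ∀ q : Fin 5 → ℂ, q ≠ 0 → q 0 = 0 → q 1 = 0 → q 3 = 0 →
      eval q F = 0 ∧
      ((∀ i : Fin 5, eval q (pderiv i F) = 0) ↔ q 4 = 0) :=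
  pz_unique_non_quasismooth_point_on_curve_general F h hF hh
end

section
/- Let X ⊂ P(1,2,3,4,7,11) be a quasismooth complete intersection of type (12,14) with coordinates x,y,z,t,v,w. If the monomial v^2 does not appear in the degree-14 defining polynomial F_2, then the point p_v = (0:0:0:0:1:0) lies on X and X is not quasismooth at p_v. Hence v^2 ∈ F_2 for quasismooth X. -/
open MvPolynomial

/-
At `p_v` all coordinates but `v` vanish, so a polynomial vanishes there unless it contains a pure
power `vⁿ`, and its `i`-th partial derivative vanishes there unless it contains `vⁿ·xᵢ`. In the
weights `(1,2,3,4,7,11)`, `vⁿ` has weight `7n` and `vⁿ·xᵢ` has weight `7n + wᵢ`; neither is ever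
`12`, and `7n = 14` only for `v²`. Hence `F₁`, `F₂` vanish at `p_v` and so does the whole gradient
of `F₁`, which makes every `2×2` minor of the Jacobian vanish.
-/

section ConcentratedPoint

variable {σ R : Type*} [CommSemiring R] {k : σ} {q : σ → R}

theorem eval_eq_zero_of_coeff_single_eq_zero (hq : ∀ i, i ≠ k → q i = 0)
    {P : MvPolynomial σ R} (hP : ∀ n, coeff (Finsupp.single k n) P = 0) : eval q P = 0 := by
  classical
  rw [eval_eq]
  refine Finset.sum_eq_zero fun d hd => ?_
  have hd_ne : d ≠ Finsupp.single k (d k) := fun h => mem_support_iff.1 hd (h ▸ hP _)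
  obtain ⟨j, hj⟩ := Finsupp.ne_iff.1 hd_ne
  have hjk : j ≠ k := by rintro rfl; simp at hj
  have hdj : d j ≠ 0 := by simpa [Finsupp.single_apply, Ne.symm hjk] using hj
  rw [Finset.prod_eq_zero (Finsupp.mem_support_iff.2 hdj) (by rw [hq j hjk, zero_pow hdj]),
    mul_zero]

theorem eval_pderiv_eq_zero_of_coeff_single_add_single_eq_zero (hq : ∀ i, i ≠ k → q i = 0)
    {P : MvPolynomial σ R} {i : σ}
    (hP : ∀ n, coeff (Finsupp.single k n + Finsupp.single i 1) P = 0) :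
    eval q (pderiv i P) = 0 :=
  eval_eq_zero_of_coeff_single_eq_zero hq fun n => by rw [coeff_pderiv, hP, zero_mul]

end ConcentratedPoint

section Weights

variable {R : Type*} [CommSemiring R] {F : MvPolynomial (Fin 6) R}

theorem coeff_single_four_eq_zero_of_weight_eq_twelve
    (hF : ∀ d ∈ F.support, d 0 + 2 * d 1 + 3 * d 2 + 4 * d 3 + 7 * d 4 + 11 * d 5 = 12)
    (n : ℕ) : coeff (Finsupp.single 4 n) F = 0 := by
  by_contra h
  have hw := hF _ (mem_support_iff.2 h)
  simp at hw
  omega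

theorem coeff_single_four_add_single_eq_zero_of_weight_eq_twelve
    (hF : ∀ d ∈ F.support, d 0 + 2 * d 1 + 3 * d 2 + 4 * d 3 + 7 * d 4 + 11 * d 5 = 12)
    (i : Fin 6) (n : ℕ) : coeff (Finsupp.single 4 n + Finsupp.single i 1) F = 0 := by
  by_contra h
  have hw := hF _ (mem_support_iff.2 h)
  fin_cases i <;> simp at hw <;> omega

theorem coeff_single_four_eq_zero_of_weight_eq_fourteen
    (hF : ∀ d ∈ F.support, d 0 + 2 * d 1 + 3 * d 2 + 4 * d 3 + 7 * d 4 + 11 * d 5 = 14)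
    (hv2 : coeff (Finsupp.single 4 2) F = 0) (n : ℕ) : coeff (Finsupp.single 4 n) F = 0 := by
  by_cases hn : n = 2
  · rwa [hn]
  by_contra h
  have hw := hF _ (mem_support_iff.2 h)
  simp at hw
  omega

end Weights

/-- let `X ⊂ ℙ(1,2,3,4,7,11)` (coordinates `x,y,z,t,v,w = X 0,…,X 5`)
be a complete intersection of quasi-homogeneous polynomials `F₁, F₂` of degrees
`12, 14`.  If the monomial `v²` does not appear in `F₂`, then `p_v = (0:0:0:0:1:0)`
lies on `X` and `X` is not quasismooth at `p_v`: at every point of the punctured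
cone over `p_v` every `2×2` minor of the Jacobian of `(F₁,F₂)` vanishes.
(Hence `v² ∈ F₂` for quasismooth `X`.) -/
theorem not_quasismooth_at_pv_of_no_v_sq
    (F1 F2 : MvPolynomial (Fin 6) ℂ)
    (h1 : ∀ d ∈ F1.support,
      d 0 + 2 * d 1 + 3 * d 2 + 4 * d 3 + 7 * d 4 + 11 * d 5 = 12)
    (h2 : ∀ d ∈ F2.support,
      d 0 + 2 * d 1 + 3 * d 2 + 4 * d 3 + 7 * d 4 + 11 * d 5 = 14)
    (hv2 : coeff (Finsupp.single 4 2) F2 = 0) :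
    (∀ q : Fin 6 → ℂ, (∀ i : Fin 6, i ≠ 4 → q i = 0) →
      eval q F1 = 0 ∧ eval q F2 = 0) ∧
    (∀ q : Fin 6 → ℂ, (∀ i : Fin 6, i ≠ 4 → q i = 0) → q 4 ≠ 0 →
      ∀ i j : Fin 6,
        eval q (pderiv i F1) * eval q (pderiv j F2)
          - eval q (pderiv j F1) * eval q (pderiv i F2) = 0) := by
  have grad_F1_eq_zero : ∀ q : Fin 6 → ℂ, (∀ i : Fin 6, i ≠ 4 → q i = 0) →
      ∀ i, eval q (pderiv i F1) = 0 := fun q hq i =>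
    eval_pderiv_eq_zero_of_coeff_single_add_single_eq_zero hq
      (coeff_single_four_add_single_eq_zero_of_weight_eq_twelve h1 i)
  refine ⟨fun q hq => ⟨?_, ?_⟩, fun q hq _ i j => ?_⟩
  · exact eval_eq_zero_of_coeff_single_eq_zero hq
      (coeff_single_four_eq_zero_of_weight_eq_twelve h1)
  · exact eval_eq_zero_of_coeff_single_eq_zero hq
      (coeff_single_four_eq_zero_of_weight_eq_fourteen h2 hv2)
  · rw [grad_F1_eq_zero q hq i, grad_F1_eq_zero q hq j]
    ring
end
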